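/- Let q be a real number with 0 < q < 1 and let a be an arbitrary real number. Then ∑_{i,j,k ≥ 0} q^{2i²+2j²+2k²−2ik−2jk−2j+ak} / ((q⁴;q⁴)_i (q⁴;q⁴)_j (q⁴;q⁴)_k) = (−1; q²)_∞ (−q^a; q²)_∞. -/

import Mathlib

open scoped BigOperators Topology Real

/-- Finite q-Pochhammer symbol `(a;q)_n = ∏_{k=0}^{n-1} (1 - a q^k)`. -/
noncomputable def qPochFinR (a q : ℝ) (n : ℕ) : ℝ := ∏ k ∈ Finset.range n, (1 - a * q ^ k)

/-- Infinite q-Pochhammer symbol `(a;q)_∞ = ∏_{k=0}^{∞} (1 - a q^k)`. -/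
noncomputable def qPochInfR (a q : ℝ) : ℝ := ∏' k : ℕ, (1 - a * q ^ k)

/-- `J_m = (q^m; q^m)_∞` with `q^m` the real power of `q`. -/
noncomputable def JR (q m : ℝ) : ℝ := qPochInfR (q ^ m) (q ^ m)

/-- `J_{a,m} = (q^a;q^m)_∞ (q^{m-a};q^m)_∞ (q^m;q^m)_∞` with real powers of `q`. -/
noncomputable def JamR (q a m : ℝ) : ℝ :=
  qPochInfR (q ^ a) (q ^ m) * qPochInfR (q ^ (m - a)) (q ^ m) * qPochInfR (q ^ m) (q ^ m)

/-- `J̄_{a,m} = (-q^a;q^m)_∞ (-q^{m-a};q^m)_∞ (q^m;q^m)_∞` with real powers of `q`. -/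
noncomputable def JbarR (q a m : ℝ) : ℝ :=
  qPochInfR (-(q ^ a)) (q ^ m) * qPochInfR (-(q ^ (m - a))) (q ^ m) * qPochInfR (q ^ m) (q ^ m)


open Filter

lemma qPochFinR_zero (a q : ℝ) : qPochFinR a q 0 = 1 := by simp [qPochFinR]

lemma qPochFinR_succ (a q : ℝ) (n : ℕ) :
    qPochFinR a q (n + 1) = qPochFinR a q n * (1 - a * q ^ n) :=
  Finset.prod_range_succ _ _

lemma qPochFinR_pos {Q a : ℝ} (hQ0 : 0 < Q) (hQ1 : Q < 1) (ha : a < 1) (n : ℕ) :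
    0 < qPochFinR a Q n := by
  refine Finset.prod_pos fun k _ => ?_
  have h1 : (0:ℝ) < Q ^ k := pow_pos hQ0 k
  have h2 : Q ^ k ≤ 1 := pow_le_one₀ hQ0.le hQ1.le
  nlinarith [mul_pos (by linarith : (0:ℝ) < 1 - a) h1]

noncomputable def eulerTerm (Q z : ℝ) (n : ℕ) : ℝ :=
  z ^ n * Q ^ (n.choose 2) / qPochFinR Q Q n

lemma choose_two_succ (n : ℕ) : (n + 1).choose 2 = n.choose 2 + n := by
  rw [Nat.choose_succ_succ]
  simp [Nat.choose_one_right, Nat.add_comm]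

lemma eulerTerm_zero (Q z : ℝ) : eulerTerm Q z 0 = 1 := by
  simp [eulerTerm, qPochFinR_zero]

lemma eulerTerm_succ {Q : ℝ} (hQ0 : 0 < Q) (hQ1 : Q < 1) (z : ℝ) (n : ℕ) :
    eulerTerm Q z (n + 1) = eulerTerm Q z n * (z * Q ^ n / (1 - Q * Q ^ n)) := by
  have hp := qPochFinR_pos hQ0 hQ1 hQ1 n
  have hf : (0:ℝ) < 1 - Q * Q ^ n := by
    have h1 : (0:ℝ) < Q ^ n := pow_pos hQ0 n
    have h2 : Q * Q ^ n < 1 := by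
      calc Q * Q ^ n ≤ Q * 1 := by
            exact mul_le_mul_of_nonneg_left (pow_le_one₀ hQ0.le hQ1.le) hQ0.le
        _ < 1 := by linarith
    linarith
  rw [eulerTerm, eulerTerm, qPochFinR_succ, choose_two_succ, pow_add, pow_succ]
  field_simp
  ring

lemma eulerTerm_nonneg {Q z : ℝ} (hQ0 : 0 < Q) (hQ1 : Q < 1) (hz : 0 ≤ z) (n : ℕ) :
    0 ≤ eulerTerm Q z n :=
  div_nonneg (mul_nonneg (pow_nonneg hz _) (pow_nonneg hQ0.le _))
    (qPochFinR_pos hQ0 hQ1 hQ1 n).le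

lemma summable_eulerTerm {Q z : ℝ} (hQ0 : 0 < Q) (hQ1 : Q < 1) (hz : 0 ≤ z) :
    Summable (eulerTerm Q z) := by
  refine summable_of_ratio_norm_eventually_le (r := 1/2) (by norm_num) ?_
  have htend : Filter.Tendsto (fun n : ℕ => z * Q ^ n) Filter.atTop (𝓝 0) := by
    simpa using (tendsto_pow_atTop_nhds_zero_of_lt_one hQ0.le hQ1).const_mul z
  have hev : ∀ᶠ n : ℕ in Filter.atTop, z * Q ^ n ≤ (1 - Q) / 2 := by
    have := htend.eventually_le_const (show (0:ℝ) < (1-Q)/2 by linarith)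
    simpa using this
  filter_upwards [hev] with n hn
  have hQQ : (0:ℝ) < 1 - Q * Q ^ n := by
    have h1 : (0:ℝ) < Q ^ n := pow_pos hQ0 n
    nlinarith [pow_le_one₀ hQ0.le hQ1.le (n := n)]
  have hQn : (1:ℝ) - Q ≤ 1 - Q * Q ^ n := by
    nlinarith [pow_pos hQ0 n, pow_le_one₀ hQ0.le hQ1.le (n := n)]
  rw [eulerTerm_succ hQ0 hQ1]
  have hterm : 0 ≤ eulerTerm Q z n := eulerTerm_nonneg hQ0 hQ1 hz n
  have hratio : z * Q ^ n / (1 - Q * Q ^ n) ≤ 1/2 := by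
    rw [div_le_iff₀ hQQ]
    nlinarith
  have hrnn : 0 ≤ z * Q ^ n / (1 - Q * Q ^ n) :=
    div_nonneg (mul_nonneg hz (pow_pos hQ0 n).le) hQQ.le
  rw [Real.norm_eq_abs, Real.norm_eq_abs, abs_of_nonneg (mul_nonneg hterm hrnn),
    abs_of_nonneg hterm]
  calc eulerTerm Q z n * (z * Q ^ n / (1 - Q * Q ^ n)) ≤ eulerTerm Q z n * (1/2) :=
        mul_le_mul_of_nonneg_left hratio hterm
    _ = 1/2 * eulerTerm Q z n := by ring
lemma eulerTerm_succ_sub {Q : ℝ} (hQ0 : 0 < Q) (hQ1 : Q < 1) (z : ℝ) (n : ℕ) :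
    eulerTerm Q z (n + 1) - eulerTerm Q (Q * z) (n + 1) = z * eulerTerm Q (Q * z) n := by
  have hp := qPochFinR_pos hQ0 hQ1 hQ1 n
  have h1 : (0:ℝ) < Q ^ n := pow_pos hQ0 n
  have hf : (0:ℝ) < 1 - Q * Q ^ n := by
    nlinarith [pow_le_one₀ hQ0.le hQ1.le (n := n)]
  rw [eulerTerm, eulerTerm, eulerTerm, qPochFinR_succ, choose_two_succ, pow_add]
  field_simp
  ring

lemma euler_funeq {Q z : ℝ} (hQ0 : 0 < Q) (hQ1 : Q < 1) (hz : 0 ≤ z) :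
    ∑' n, eulerTerm Q z n = (1 + z) * ∑' n, eulerTerm Q (Q * z) n := by
  have hz' : 0 ≤ Q * z := mul_nonneg hQ0.le hz
  have hs1 := summable_eulerTerm hQ0 hQ1 hz
  have hs2 := summable_eulerTerm hQ0 hQ1 hz'
  have hd : Summable (fun n => eulerTerm Q z n - eulerTerm Q (Q * z) n) := hs1.sub hs2
  have h1 : ∑' n, (eulerTerm Q z n - eulerTerm Q (Q * z) n)
      = z * ∑' n, eulerTerm Q (Q * z) n := by
    rw [Summable.tsum_eq_zero_add hd]
    simp only [eulerTerm_zero, sub_self, zero_add]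
    have : ∀ n : ℕ, eulerTerm Q z (n + 1) - eulerTerm Q (Q * z) (n + 1)
        = z * eulerTerm Q (Q * z) n := eulerTerm_succ_sub hQ0 hQ1 z
    rw [tsum_congr this, tsum_mul_left]
  rw [Summable.tsum_sub hs1 hs2] at h1
  have := h1
  linarith [this]

lemma euler_iterate {Q z : ℝ} (hQ0 : 0 < Q) (hQ1 : Q < 1) (hz : 0 ≤ z) (N : ℕ) :
    ∑' n, eulerTerm Q z n
      = (∏ k ∈ Finset.range N, (1 + z * Q ^ k)) * ∑' n, eulerTerm Q (Q ^ N * z) n := by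
  induction N with
  | zero => simp
  | succ N ih =>
    rw [ih, Finset.prod_range_succ]
    have h := euler_funeq hQ0 hQ1 (mul_nonneg (pow_pos hQ0 N).le hz)
    rw [h]
    have : Q * (Q ^ N * z) = Q ^ (N + 1) * z := by ring
    rw [this]
    ring

lemma multipliable_one_add_geom {Q z : ℝ} (hQ0 : 0 < Q) (hQ1 : Q < 1) (hz : 0 ≤ z) :
    Multipliable (fun k : ℕ => 1 + z * Q ^ k) := by
  have hpos : ∀ (x : Unit) (n : ℕ), 0 < 1 + z * Q ^ n := by
    intro _ n
    have := mul_nonneg hz (pow_pos hQ0 n).le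
    linarith
  refine Real.multipliable_of_summable_log (hpos ()) ?_
  have hgeo : Summable (fun n : ℕ => z * Q ^ n) :=
    (summable_geometric_of_lt_one hQ0.le hQ1).mul_left z
  refine hgeo.of_nonneg_of_le (fun n => ?_) (fun n => ?_)
  · exact Real.log_nonneg (by nlinarith [mul_nonneg hz (pow_pos hQ0 n).le])
  · have h := Real.log_le_sub_one_of_pos (hpos () n)
    simpa using h

lemma euler_tendsto_one {Q z : ℝ} (hQ0 : 0 < Q) (hQ1 : Q < 1) (hz : 0 ≤ z) :
    Filter.Tendsto (fun N : ℕ => ∑' n, eulerTerm Q (Q ^ N * z) n) Filter.atTop (𝓝 1) := by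
  set z' : ℝ := max z 1 with hz'def
  have hz'1 : (1:ℝ) ≤ z' := le_max_right _ _
  have hz'0 : (0:ℝ) ≤ z' := by linarith
  have hzz' : z ≤ z' := le_max_left _ _
  have hsz' := summable_eulerTerm hQ0 hQ1 hz'0
  have hC : Summable (fun n => eulerTerm Q z' (n + 1)) := (summable_nat_add_iff 1).mpr hsz'
  set C : ℝ := ∑' n, eulerTerm Q z' (n + 1) with hCdef
  have hlow : ∀ w : ℝ, 0 ≤ w → (1:ℝ) ≤ ∑' n, eulerTerm Q w n := by
    intro w hw
    have := Summable.le_tsum (summable_eulerTerm hQ0 hQ1 hw) 0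
      (fun j _ => eulerTerm_nonneg hQ0 hQ1 hw j)
    rwa [eulerTerm_zero] at this
  have hupp : ∀ w : ℝ, 0 ≤ w → w ≤ z' → ∑' n, eulerTerm Q w n ≤ 1 + w * C := by
    intro w hw hwz
    have hsw := summable_eulerTerm hQ0 hQ1 hw
    rw [Summable.tsum_eq_zero_add hsw, eulerTerm_zero]
    have hsw' : Summable (fun n => eulerTerm Q w (n + 1)) := (summable_nat_add_iff 1).mpr hsw
    have hle : ∀ n : ℕ, eulerTerm Q w (n + 1) ≤ w * eulerTerm Q z' (n + 1) := by
      intro n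
      rw [eulerTerm, eulerTerm]
      have hp := (qPochFinR_pos hQ0 hQ1 hQ1 (n + 1))
      rw [← mul_div_assoc, div_le_div_iff_of_pos_right hp]
      have h1 : w ^ (n + 1) ≤ w * z' ^ (n + 1) := by
        rw [pow_succ']
        refine mul_le_mul_of_nonneg_left ?_ hw
        calc w ^ n ≤ z' ^ n := pow_le_pow_left₀ hw hwz n
          _ ≤ z' ^ (n + 1) := pow_le_pow_right₀ hz'1 (Nat.le_succ n)
      calc w ^ (n + 1) * Q ^ ((n+1).choose 2) ≤ (w * z' ^ (n + 1)) * Q ^ ((n+1).choose 2) :=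
            mul_le_mul_of_nonneg_right h1 (pow_pos hQ0 _).le
        _ = w * (z' ^ (n + 1) * Q ^ ((n+1).choose 2)) := by ring
    calc (1:ℝ) + ∑' n, eulerTerm Q w (n + 1)
        ≤ 1 + ∑' n, w * eulerTerm Q z' (n + 1) := by
          exact add_le_add_right (Summable.tsum_le_tsum hle hsw' (hC.mul_left w)) 1
      _ = 1 + w * C := by rw [tsum_mul_left]
  have hwN : ∀ N : ℕ, 0 ≤ Q ^ N * z := fun N => mul_nonneg (pow_pos hQ0 N).le hz
  have hwNz' : ∀ N : ℕ, Q ^ N * z ≤ z' := by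
    intro N
    calc Q ^ N * z ≤ 1 * z := by
          exact mul_le_mul_of_nonneg_right (pow_le_one₀ hQ0.le hQ1.le) hz
      _ = z := one_mul z
      _ ≤ z' := hzz'
  have htend : Filter.Tendsto (fun N : ℕ => 1 + (Q ^ N * z) * C) Filter.atTop (𝓝 1) := by
    have h0 : Filter.Tendsto (fun N : ℕ => (Q ^ N * z) * C) Filter.atTop (𝓝 0) := by
      have := ((tendsto_pow_atTop_nhds_zero_of_lt_one hQ0.le hQ1).mul_const z).mul_const C
      simpa using this
    have := h0.const_add (1:ℝ)
    simpa using this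
  refine tendsto_of_tendsto_of_tendsto_of_le_of_le tendsto_const_nhds htend ?_ ?_
  · intro N; exact hlow _ (hwN N)
  · intro N; exact hupp _ (hwN N) (hwNz' N)

theorem euler_tsum_eq_tprod {Q z : ℝ} (hQ0 : 0 < Q) (hQ1 : Q < 1) (hz : 0 ≤ z) :
    ∑' n, eulerTerm Q z n = ∏' k : ℕ, (1 + z * Q ^ k) := by
  have hmul := multipliable_one_add_geom hQ0 hQ1 hz
  have h1 : Filter.Tendsto
      (fun N : ℕ => (∏ k ∈ Finset.range N, (1 + z * Q ^ k)) * ∑' n, eulerTerm Q (Q ^ N * z) n)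
      Filter.atTop (𝓝 ((∏' k : ℕ, (1 + z * Q ^ k)) * 1)) :=
    hmul.hasProd.tendsto_prod_nat.mul (euler_tendsto_one hQ0 hQ1 hz)
  have h2 : (fun N : ℕ => (∏ k ∈ Finset.range N, (1 + z * Q ^ k))
      * ∑' n, eulerTerm Q (Q ^ N * z) n) = fun _ => ∑' n, eulerTerm Q z n := by
    funext N
    exact (euler_iterate hQ0 hQ1 hz N).symm
  rw [h2] at h1
  have := tendsto_nhds_unique h1 tendsto_const_nhds
  rw [mul_one] at this
  exact this.symm
lemma choose_two_cast (n : ℕ) : ((n.choose 2 : ℕ) : ℝ) = ((n:ℝ)^2 - n) / 2 := by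
  induction n with
  | zero => simp
  | succ n ih =>
    rw [choose_two_succ]
    push_cast
    rw [ih]
    ring

lemma prod_range_two_mul (r : ℝ) (N : ℕ) :
    ∏ n ∈ Finset.range (2*N), (1 + r ^ n)
      = (∏ m ∈ Finset.range N, (1 + r * (r^2) ^ m)) * ∏ m ∈ Finset.range N, (1 + (r^2) ^ m) := by
  induction N with
  | zero => simp
  | succ N ih =>
    have h2 : 2*(N+1) = (2*N)+1+1 := by ring
    rw [h2, Finset.prod_range_succ, Finset.prod_range_succ, Finset.prod_range_succ,
      Finset.prod_range_succ, ih]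
    have e1 : r ^ (2*N) = (r^2)^N := by rw [pow_mul]
    have e2 : r ^ (2*N+1) = r * (r^2)^N := by rw [pow_succ, pow_mul]; ring
    rw [e1, e2]
    ring

lemma tprod_one_add_interleave {r : ℝ} (hr0 : 0 < r) (hr1 : r < 1) :
    ∏' n : ℕ, (1 + r ^ n)
      = (∏' m : ℕ, (1 + r * (r^2) ^ m)) * ∏' m : ℕ, (1 + (r^2) ^ m) := by
  have hr20 : (0:ℝ) < r^2 := by positivity
  have hr21 : r^2 < 1 := by nlinarith
  have hA : Multipliable (fun n : ℕ => 1 + r ^ n) := by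
    have := multipliable_one_add_geom hr0 hr1 (zero_le_one)
    simpa using this
  have hB := multipliable_one_add_geom hr20 hr21 hr0.le
  have hC : Multipliable (fun m : ℕ => 1 + (r^2) ^ m) := by
    have := multipliable_one_add_geom hr20 hr21 (zero_le_one (α := ℝ))
    simpa using this
  have h2N : Tendsto (fun N : ℕ => 2*N) atTop atTop :=
    Filter.tendsto_atTop_atTop_of_monotone (fun a b h => by omega) (fun b => ⟨b, by omega⟩)
  have h1 : Tendsto (fun N : ℕ => ∏ n ∈ Finset.range (2*N), (1 + r ^ n)) atTop
      (𝓝 (∏' n : ℕ, (1 + r ^ n))) := hA.hasProd.tendsto_prod_nat.comp h2N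
  have h2 : Tendsto (fun N : ℕ =>
      (∏ m ∈ Finset.range N, (1 + r * (r^2) ^ m)) * ∏ m ∈ Finset.range N, (1 + (r^2) ^ m))
      atTop (𝓝 ((∏' m : ℕ, (1 + r * (r^2) ^ m)) * ∏' m : ℕ, (1 + (r^2) ^ m))) :=
    hB.hasProd.tendsto_prod_nat.mul hC.hasProd.tendsto_prod_nat
  have heq : (fun N : ℕ => ∏ n ∈ Finset.range (2*N), (1 + r ^ n))
      = fun N : ℕ => (∏ m ∈ Finset.range N, (1 + r * (r^2) ^ m))
          * ∏ m ∈ Finset.range N, (1 + (r^2) ^ m) := funext fun N => prod_range_two_mul r N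
  rw [heq] at h1
  exact tendsto_nhds_unique h1 h2

lemma eulerTerm_rpow {q : ℝ} (hq0 : 0 < q) (m : ℕ) (t : ℝ) (n : ℕ) :
    eulerTerm (q ^ m) (q ^ t) n
      = q ^ (t * n + (m:ℝ) * ((n:ℝ)^2 - n) / 2) / qPochFinR (q ^ m) (q ^ m) n := by
  unfold eulerTerm
  congr 1
  rw [← Real.rpow_natCast q m, ← Real.rpow_natCast (q ^ t) n,
    ← Real.rpow_natCast (q ^ (m:ℝ)) (n.choose 2), ← Real.rpow_mul hq0.le,
    ← Real.rpow_mul hq0.le, ← Real.rpow_add hq0, choose_two_cast]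
  ring_nf
section Aux
variable {q : ℝ}

lemma hQ20 (hq0 : 0 < q) : (0:ℝ) < q ^ (2:ℕ) := pow_pos hq0 2
lemma hQ21 (hq0 : 0 < q) (hq1 : q < 1) : q ^ (2:ℕ) < 1 := pow_lt_one₀ hq0.le hq1 (by norm_num)
lemma hQ40 (hq0 : 0 < q) : (0:ℝ) < q ^ (4:ℕ) := pow_pos hq0 4
lemma hQ41 (hq0 : 0 < q) (hq1 : q < 1) : q ^ (4:ℕ) < 1 := pow_lt_one₀ hq0.le hq1 (by norm_num)
lemma hQ42 : (q ^ (4:ℕ) : ℝ) = (q ^ (2:ℕ)) ^ 2 := by ring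

variable (hq0 : 0 < q) (hq1 : q < 1)

lemma aux_pochsplit (k : ℕ) :
    qPochFinR (q ^ (4:ℕ)) (q ^ (4:ℕ)) k
      = qPochFinR (q ^ (2:ℕ)) (q ^ (2:ℕ)) k * qPochFinR (-(q ^ (2:ℕ))) (q ^ (2:ℕ)) k := by
  induction k with
  | zero => rw [qPochFinR_zero, qPochFinR_zero, qPochFinR_zero]; ring
  | succ k ih =>
    rw [qPochFinR_succ, qPochFinR_succ, qPochFinR_succ, ih, hQ42 (q := q)]
    ring

lemma rpow_two_eq : q ^ ((2:ℝ)) = q ^ (2:ℕ) := by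
  rw [← Real.rpow_natCast q 2]; norm_num

include hq0 in
lemma q2_mul_pow (k : ℕ) : q ^ (2:ℕ) * (q ^ (2:ℕ)) ^ k = q ^ ((2:ℝ) * k + 2) := by
  rw [← Real.rpow_natCast q 2, ← Real.rpow_natCast (q ^ ((2:ℕ):ℝ)) k,
    ← Real.rpow_mul hq0.le, ← Real.rpow_add hq0]
  congr 1
  push_cast
  ring

include hq0 hq1 in
lemma aux_phi (k : ℕ) :
    (∑' n, eulerTerm (q ^ (4:ℕ)) (q ^ ((2:ℝ) - 2*(k:ℝ))) n)
      * (∑' n, eulerTerm (q ^ (4:ℕ)) (q ^ (-(2:ℝ)*(k:ℝ))) n)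
    = (∑' n, eulerTerm (q ^ (4:ℕ)) (q ^ ((2:ℝ))) n)
        * (∑' n, eulerTerm (q ^ (4:ℕ)) (q ^ ((0:ℝ))) n)
        * (q ^ (-((k:ℝ)^2 + k)) * qPochFinR (-(q ^ (2:ℕ))) (q ^ (2:ℕ)) k) := by
  induction k with
  | zero =>
    rw [qPochFinR_zero]
    norm_num
  | succ k ih =>
    have e1 : (2:ℝ) - 2*((k+1:ℕ):ℝ) = -(2:ℝ)*(k:ℝ) := by push_cast; ring
    rw [e1]
    have e2 : ∑' n, eulerTerm (q ^ (4:ℕ)) (q ^ (-(2:ℝ)*((k+1:ℕ):ℝ))) n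
        = (1 + q ^ (-(2:ℝ)*((k+1:ℕ):ℝ)))
          * ∑' n, eulerTerm (q ^ (4:ℕ)) (q ^ ((2:ℝ) - 2*(k:ℝ))) n := by
      rw [euler_funeq (hQ40 hq0) (hQ41 hq0 hq1) (Real.rpow_pos_of_pos hq0 _).le]
      congr 2
      rw [← Real.rpow_natCast q 4, ← Real.rpow_add hq0]
      congr 1
      push_cast
      ring
    rw [e2, qPochFinR_succ]
    have key1 : (1 + q ^ (-(2:ℝ)*((k+1:ℕ):ℝ)))
        = q ^ (-(2:ℝ)*((k+1:ℕ):ℝ)) * (1 + q ^ (2:ℕ) * (q ^ (2:ℕ)) ^ k) := by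
      rw [mul_add, mul_one, q2_mul_pow hq0, ← Real.rpow_add hq0]
      have : -(2:ℝ)*((k+1:ℕ):ℝ) + ((2:ℝ)*k + 2) = 0 := by push_cast; ring
      rw [this, Real.rpow_zero]
      ring
    have key2 : q ^ (-(2:ℝ)*((k+1:ℕ):ℝ)) * q ^ (-((k:ℝ)^2 + k))
        = q ^ (-(((k+1:ℕ):ℝ)^2 + ((k+1:ℕ):ℝ))) := by
      rw [← Real.rpow_add hq0]
      congr 1
      push_cast
      ring
    have hone : (1 - -(q ^ (2:ℕ)) * (q ^ (2:ℕ)) ^ k) = 1 + q ^ (2:ℕ) * (q ^ (2:ℕ)) ^ k := by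
      ring
    rw [hone, key1]
    calc (∑' n, eulerTerm (q ^ (4:ℕ)) (q ^ (-(2:ℝ)*(k:ℝ))) n)
          * ((q ^ (-(2:ℝ)*((k+1:ℕ):ℝ)) * (1 + q ^ (2:ℕ) * (q ^ (2:ℕ)) ^ k))
            * ∑' n, eulerTerm (q ^ (4:ℕ)) (q ^ ((2:ℝ) - 2*(k:ℝ))) n)
        = ((∑' n, eulerTerm (q ^ (4:ℕ)) (q ^ ((2:ℝ) - 2*(k:ℝ))) n)
            * (∑' n, eulerTerm (q ^ (4:ℕ)) (q ^ (-(2:ℝ)*(k:ℝ))) n))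
          * (q ^ (-(2:ℝ)*((k+1:ℕ):ℝ)) * (1 + q ^ (2:ℕ) * (q ^ (2:ℕ)) ^ k)) := by ring
      _ = (∑' n, eulerTerm (q ^ (4:ℕ)) (q ^ ((2:ℝ))) n)
            * (∑' n, eulerTerm (q ^ (4:ℕ)) (q ^ ((0:ℝ))) n)
          * ((q ^ (-(2:ℝ)*((k+1:ℕ):ℝ)) * q ^ (-((k:ℝ)^2 + k)))
            * (qPochFinR (-(q ^ (2:ℕ))) (q ^ (2:ℕ)) k * (1 + q ^ (2:ℕ) * (q ^ (2:ℕ)) ^ k))) := by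
          rw [ih]; ring
      _ = _ := by rw [key2]

include hq0 hq1 in
lemma aux_phi0 :
    (∑' n, eulerTerm (q ^ (4:ℕ)) (q ^ ((2:ℝ))) n)
      * (∑' n, eulerTerm (q ^ (4:ℕ)) (q ^ ((0:ℝ))) n)
    = qPochInfR (-1) (q ^ (2:ℕ)) := by
  have h1 : ∑' n, eulerTerm (q ^ (4:ℕ)) (q ^ ((2:ℝ))) n
      = ∏' m : ℕ, (1 + q ^ (2:ℕ) * (q ^ (4:ℕ)) ^ m) := by
    rw [euler_tsum_eq_tprod (hQ40 hq0) (hQ41 hq0 hq1) (Real.rpow_pos_of_pos hq0 _).le,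
      rpow_two_eq]
  have h2 : ∑' n, eulerTerm (q ^ (4:ℕ)) (q ^ ((0:ℝ))) n
      = ∏' m : ℕ, (1 + (q ^ (4:ℕ)) ^ m) := by
    rw [euler_tsum_eq_tprod (hQ40 hq0) (hQ41 hq0 hq1) (Real.rpow_pos_of_pos hq0 _).le,
      Real.rpow_zero]
    exact tprod_congr fun m => by ring
  have h3 : qPochInfR (-1) (q ^ (2:ℕ)) = ∏' n : ℕ, (1 + (q ^ (2:ℕ)) ^ n) := by
    unfold qPochInfR
    exact tprod_congr fun n => by ring
  rw [h1, h2, h3, tprod_one_add_interleave (hQ20 hq0) (hQ21 hq0 hq1), ← hQ42]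

include hq0 in
lemma eulerTerm_rpow4 (t : ℝ) (n : ℕ) :
    eulerTerm (q ^ (4:ℕ)) (q ^ t) n
      = q ^ (t * n + 2*(n:ℝ)^2 - 2*(n:ℝ)) / qPochFinR (q ^ (4:ℕ)) (q ^ (4:ℕ)) n := by
  rw [eulerTerm_rpow hq0]
  congr 1
  push_cast
  ring

include hq0 in
lemma eulerTerm_rpow2 (t : ℝ) (n : ℕ) :
    eulerTerm (q ^ (2:ℕ)) (q ^ t) n
      = q ^ (t * n + (n:ℝ)^2 - (n:ℝ)) / qPochFinR (q ^ (2:ℕ)) (q ^ (2:ℕ)) n := by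
  rw [eulerTerm_rpow hq0]
  congr 1
  push_cast
  ring

include hq0 hq1 in
lemma aux_term (a : ℝ) (k : ℕ) :
    (∑' n, eulerTerm (q ^ (4:ℕ)) (q ^ ((2:ℝ) - 2*(k:ℝ))) n)
      * (∑' n, eulerTerm (q ^ (4:ℕ)) (q ^ (-(2:ℝ)*(k:ℝ))) n)
      * eulerTerm (q ^ (4:ℕ)) (q ^ (a+2)) k
    = qPochInfR (-1) (q ^ (2:ℕ)) * eulerTerm (q ^ (2:ℕ)) (q ^ a) k := by
  rw [aux_phi hq0 hq1, aux_phi0 hq0 hq1, eulerTerm_rpow4 hq0, eulerTerm_rpow2 hq0,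
    aux_pochsplit]
  have hp2 : (0:ℝ) < qPochFinR (q ^ (2:ℕ)) (q ^ (2:ℕ)) k :=
    qPochFinR_pos (hQ20 hq0) (hQ21 hq0 hq1) (hQ21 hq0 hq1) k
  have hpb : (0:ℝ) < qPochFinR (-(q ^ (2:ℕ))) (q ^ (2:ℕ)) k :=
    qPochFinR_pos (hQ20 hq0) (hQ21 hq0 hq1) (by nlinarith [hQ20 (q := q) hq0]) k
  set C : ℝ := qPochInfR (-1) (q ^ (2:ℕ)) with hC
  set B : ℝ := qPochFinR (-(q ^ (2:ℕ))) (q ^ (2:ℕ)) k with hB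
  set P2 : ℝ := qPochFinR (q ^ (2:ℕ)) (q ^ (2:ℕ)) k with hP2
  set X : ℝ := q ^ (-((k:ℝ)^2 + (k:ℝ))) with hX
  set Y : ℝ := q ^ ((a+2) * (k:ℝ) + 2*(k:ℝ)^2 - 2*(k:ℝ)) with hY
  set Z : ℝ := q ^ (a * (k:ℝ) + (k:ℝ)^2 - (k:ℝ)) with hZ
  have hkey : X * Y = Z := by
    rw [hX, hY, hZ, ← Real.rpow_add hq0]
    congr 1
    ring
  calc C * (X * B) * (Y / (P2 * B)) = C * (X * Y / P2) * (B * B⁻¹) := by ring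
    _ = C * (X * Y / P2) := by rw [mul_inv_cancel₀ hpb.ne', mul_one]
    _ = C * (Z / P2) := by rw [hkey]

include hq0 hq1 in
lemma aux_rhs (a : ℝ) :
    ∑' k, eulerTerm (q ^ (2:ℕ)) (q ^ a) k = qPochInfR (-(q ^ a)) (q ^ (2:ℕ)) := by
  rw [euler_tsum_eq_tprod (hQ20 hq0) (hQ21 hq0 hq1) (Real.rpow_pos_of_pos hq0 _).le]
  unfold qPochInfR
  exact tprod_congr fun k => by ring

include hq0 in
lemma aux_split (a : ℝ) (i j k : ℕ) :
    q ^ (2*(i:ℝ)^2 + 2*(j:ℝ)^2 + 2*(k:ℝ)^2 - 2*(i:ℝ)*(k:ℝ) - 2*(j:ℝ)*(k:ℝ)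
          - 2*(j:ℝ) + a*(k:ℝ)) /
      (qPochFinR (q ^ (4:ℕ)) (q ^ (4:ℕ)) i * qPochFinR (q ^ (4:ℕ)) (q ^ (4:ℕ)) j *
        qPochFinR (q ^ (4:ℕ)) (q ^ (4:ℕ)) k)
    = eulerTerm (q ^ (4:ℕ)) (q ^ ((2:ℝ) - 2*(k:ℝ))) i
        * eulerTerm (q ^ (4:ℕ)) (q ^ (-(2:ℝ)*(k:ℝ))) j
        * eulerTerm (q ^ (4:ℕ)) (q ^ (a+2)) k := by
  rw [eulerTerm_rpow4 hq0, eulerTerm_rpow4 hq0, eulerTerm_rpow4 hq0, div_mul_div_comm,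
    div_mul_div_comm, ← Real.rpow_add hq0, ← Real.rpow_add hq0]
  congr 2
  push_cast
  ring
end Aux

theorem stmt13 (q : ℝ) (hq0 : 0 < q) (hq1 : q < 1) (a : ℝ) :
    (∑' (i : ℕ) (j : ℕ) (k : ℕ),
      q ^ (2*(i:ℝ)^2 + 2*(j:ℝ)^2 + 2*(k:ℝ)^2 - 2*(i:ℝ)*(k:ℝ) - 2*(j:ℝ)*(k:ℝ)
            - 2*(j:ℝ) + a*(k:ℝ)) /
        (qPochFinR (q ^ (4:ℕ)) (q ^ (4:ℕ)) i * qPochFinR (q ^ (4:ℕ)) (q ^ (4:ℕ)) j *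
          qPochFinR (q ^ (4:ℕ)) (q ^ (4:ℕ)) k)) =
    qPochInfR (-1) (q ^ (2:ℕ)) * qPochInfR (-(q ^ a)) (q ^ (2:ℕ)) := by
  have hQ40' : (0:ℝ) < q ^ (4:ℕ) := hQ40 hq0
  have hQ41' : q ^ (4:ℕ) < 1 := hQ41 hq0 hq1
  have hQ20' : (0:ℝ) < q ^ (2:ℕ) := hQ20 hq0
  have hQ21' : q ^ (2:ℕ) < 1 := hQ21 hq0 hq1
  set TI : ℕ → ℕ → ℝ := fun k i => eulerTerm (q ^ (4:ℕ)) (q ^ ((2:ℝ) - 2*(k:ℝ))) i with hTIdef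
  set TJ : ℕ → ℕ → ℝ := fun k j => eulerTerm (q ^ (4:ℕ)) (q ^ (-(2:ℝ)*(k:ℝ))) j with hTJdef
  set TK : ℕ → ℝ := fun k => eulerTerm (q ^ (4:ℕ)) (q ^ (a+2)) k with hTKdef
  have hTI0 : ∀ k i, 0 ≤ TI k i := fun k i =>
    eulerTerm_nonneg hQ40' hQ41' (Real.rpow_pos_of_pos hq0 _).le i
  have hTJ0 : ∀ k j, 0 ≤ TJ k j := fun k j =>
    eulerTerm_nonneg hQ40' hQ41' (Real.rpow_pos_of_pos hq0 _).le j
  have hTK0 : ∀ k, 0 ≤ TK k := fun k =>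
    eulerTerm_nonneg hQ40' hQ41' (Real.rpow_pos_of_pos hq0 _).le k
  have hSI : ∀ k, Summable (TI k) := fun k =>
    summable_eulerTerm hQ40' hQ41' (Real.rpow_pos_of_pos hq0 _).le
  have hSJ : ∀ k, Summable (TJ k) := fun k =>
    summable_eulerTerm hQ40' hQ41' (Real.rpow_pos_of_pos hq0 _).le
  have hSK2 : Summable (fun k => eulerTerm (q ^ (2:ℕ)) (q ^ a) k) :=
    summable_eulerTerm hQ20' hQ21' (Real.rpow_pos_of_pos hq0 _).le
  set T : ℕ × ℕ × ℕ → ℝ := fun p => TI p.1 p.2.1 * TJ p.1 p.2.2 * TK p.1 with hTdef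
  have hT0 : 0 ≤ T := fun p =>
    mul_nonneg (mul_nonneg (hTI0 _ _) (hTJ0 _ _)) (hTK0 _)
  have hrow : ∀ k, Summable (fun r : ℕ × ℕ => T (k, r)) := by
    intro k
    exact ((hSI k).mul_of_nonneg (hSJ k) (hTI0 k) (hTJ0 k)).mul_right (TK k)
  have hrowsum : ∀ k, ∑' r : ℕ × ℕ, T (k, r) = (∑' i, TI k i) * (∑' j, TJ k j) * TK k := by
    intro k
    rw [Summable.tsum_prod' (hrow k) (fun i => (hrow k).prod_factor i)]
    have h1 : ∀ i : ℕ, ∑' j, T (k, (i, j)) = (TI k i * TK k) * ∑' j, TJ k j := by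
      intro i
      rw [← tsum_mul_left]
      exact tsum_congr fun j => by simp only [hTdef]; ring
    rw [tsum_congr h1]
    have h2 : ∀ i : ℕ, (TI k i * TK k) * ∑' j, TJ k j = ((TK k) * ∑' j, TJ k j) * TI k i :=
      fun i => by ring
    rw [tsum_congr h2, tsum_mul_left]
    ring
  have hcol : Summable (fun k => ∑' r : ℕ × ℕ, T (k, r)) := by
    refine Summable.congr (f := fun k => qPochInfR (-1) (q ^ (2:ℕ)) * eulerTerm (q ^ (2:ℕ)) (q ^ a) k)
      (hSK2.mul_left _) fun k => ?_
    rw [hrowsum k]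
    exact (aux_term hq0 hq1 a k).symm
  have hT : Summable T := by
    refine (summable_prod_of_nonneg ?_).mpr ⟨hrow, hcol⟩
    intro p
    exact hT0 p
  set e : (ℕ × ℕ × ℕ) ≃ (ℕ × ℕ × ℕ) :=
    ⟨fun p => (p.2.2, p.1, p.2.1), fun p => (p.2.1, p.2.2, p.1), fun p => rfl, fun p => rfl⟩
    with hedef
  have hTe : Summable (T ∘ e) := (Equiv.summable_iff e).mpr hT
  calc (∑' (i : ℕ) (j : ℕ) (k : ℕ),
      q ^ (2*(i:ℝ)^2 + 2*(j:ℝ)^2 + 2*(k:ℝ)^2 - 2*(i:ℝ)*(k:ℝ) - 2*(j:ℝ)*(k:ℝ)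
            - 2*(j:ℝ) + a*(k:ℝ)) /
        (qPochFinR (q ^ (4:ℕ)) (q ^ (4:ℕ)) i * qPochFinR (q ^ (4:ℕ)) (q ^ (4:ℕ)) j *
          qPochFinR (q ^ (4:ℕ)) (q ^ (4:ℕ)) k))
      = ∑' (i : ℕ) (j : ℕ) (k : ℕ), TI k i * TJ k j * TK k := by
        refine tsum_congr fun i => tsum_congr fun j => tsum_congr fun k => ?_
        exact aux_split hq0 a i j k
    _ = ∑' p : ℕ × ℕ × ℕ, (T ∘ e) p := by
        symm
        rw [Summable.tsum_prod' hTe (fun i => hTe.prod_factor i)]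
        refine tsum_congr fun i => ?_
        rw [Summable.tsum_prod' (hTe.prod_factor i) (fun j => (hTe.prod_factor i).prod_factor j)]
        rfl
    _ = ∑' p : ℕ × ℕ × ℕ, T p := e.tsum_eq T
    _ = ∑' (k : ℕ), ∑' r : ℕ × ℕ, T (k, r) := Summable.tsum_prod' hT (fun k => hT.prod_factor k)
    _ = ∑' (k : ℕ), qPochInfR (-1) (q ^ (2:ℕ)) * eulerTerm (q ^ (2:ℕ)) (q ^ a) k := by
        refine tsum_congr fun k => ?_
        rw [hrowsum k]
        exact aux_term hq0 hq1 a k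
    _ = qPochInfR (-1) (q ^ (2:ℕ)) * ∑' k, eulerTerm (q ^ (2:ℕ)) (q ^ a) k := tsum_mul_left
    _ = qPochInfR (-1) (q ^ (2:ℕ)) * qPochInfR (-(q ^ a)) (q ^ (2:ℕ)) := by
        rw [aux_rhs hq0 hq1 a]
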